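/- Let G be a connected simple graph on N ≥ 2 vertices with Laplacian L, α* = 2/(λ₂(L) + λ_N(L)), W = I − α*L, and γ₂ = (λ_N(L) − λ₂(L))/(λ_N(L) + λ₂(L)). Let X₀, n₀, n₁, … be mutually independent square-integrable random vectors in ℝ^N with Cov(X₀) = (4μ²/σ²)·I and Cov(n_i) = R = diag(φ₁², …, φ_N²) for all i, and define X_{i+1} = W X_i + n_i. Set φ_max² = max_j φ_j². Then for every iteration i ≥ 0 and every coordinate n, Var(X_n(i)) ≤ (4μ²/σ²)·[1/N + γ₂^{2i}(1 − 1/N)] + φ_max²·[ i/N + ((1 − γ₂^{2i})/(1 − γ₂²))·(1 − 1/N) ]. -/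

import Mathlib

open MeasureTheory ProbabilityTheory Matrix

/-- The covariance matrix of a random vector `X : Ω → (Fin N → ℝ)`:
entry `(m, n)` is `Cov(X_m, X_n) = E[(X_m - E X_m)(X_n - E X_n)]`. -/
noncomputable def covMatrix {N : ℕ} {Ω : Type*} [MeasurableSpace Ω]
    (P : Measure Ω) (X : Ω → Fin N → ℝ) : Matrix (Fin N) (Fin N) ℝ :=
  Matrix.of fun m n =>
    ∫ ω, (X ω m - ∫ ω', X ω' m ∂P) * (X ω n - ∫ ω', X ω' n ∂P) ∂P

/-!
Since `X i` is a function of `X 0, n 0, …, n (i-1)`, it is independent of `n i`, so the covariance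
obeys `Cov(X (i+1)) = W Cov(X i) Wᵀ + R` and hence
`Cov(X i) = c W^(2i) + ∑_{k<i} W^k R W^k` with `c = 4μ²/σ²`; bounding `R ≤ φ_max² I` reduces
everything to the diagonal of `W^(2k)`. As `W = 1 - α* L` is a function of `L`,
`(W^(2k))_{nn} = ∑_j (1 - α* λ_j)^(2k) u_j(n)²` over an orthonormal eigenbasis `u` of `L`.
On a connected graph the kernel of `L` is the line of constant vectors, so it contributes exactly
`1/N`, while every nonzero eigenvalue lies in `[λ₂, λ_N]`, where `|1 - α* λ| ≤ γ₂`. Summing the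
geometric series gives the bound.
-/

section Covariance

variable {Ω : Type*} [MeasurableSpace Ω] {P : Measure Ω} {M N : ℕ}

lemma covMatrix_apply (X : Ω → Fin N → ℝ) (m n : Fin N) :
    covMatrix P X m n = cov[fun ω => X ω m, fun ω => X ω n; P] := rfl

lemma covMatrix_apply_self (X : Ω → Fin N → ℝ) (n : Fin N) :
    covMatrix P X n n = ∫ ω, (X ω n - ∫ ω', X ω' n ∂P) ^ 2 ∂P := by
  simp only [covMatrix, of_apply, sq]

lemma memLp_mulVec_apply {X : Ω → Fin N → ℝ} (hX : ∀ n, MemLp (fun ω => X ω n) 2 P)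
    (W : Matrix (Fin M) (Fin N) ℝ) (m : Fin M) :
    MemLp (fun ω => (W *ᵥ X ω) m) 2 P :=
  memLp_finsetSum Finset.univ fun p _ => (hX p).const_mul (W m p)

variable [IsFiniteMeasure P]

lemma covMatrix_mulVec {X : Ω → Fin N → ℝ} (hX : ∀ n, MemLp (fun ω => X ω n) 2 P)
    (W : Matrix (Fin M) (Fin N) ℝ) :
    covMatrix P (fun ω => W *ᵥ X ω) = W * covMatrix P X * Wᵀ := by
  ext m n
  have hW : ∀ m, (fun ω => (W *ᵥ X ω) m) = fun ω => ∑ p, W m p * X ω p := fun m => rfl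
  rw [covMatrix_apply, hW, hW, covariance_fun_sum_fun_sum (fun p => (hX p).const_mul _)
    (fun p => (hX p).const_mul _)]
  simp only [covariance_const_mul_left, covariance_const_mul_right, mul_apply, transpose_apply,
    covMatrix_apply, Finset.sum_mul]
  rw [Finset.sum_comm]
  exact Finset.sum_congr rfl fun p _ => Finset.sum_congr rfl fun q _ => by ring

lemma covMatrix_add_of_indepFun {X Y : Ω → Fin N → ℝ} (hX : ∀ n, MemLp (fun ω => X ω n) 2 P)
    (hY : ∀ n, MemLp (fun ω => Y ω n) 2 P) (hXY : IndepFun X Y P) :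
    covMatrix P (fun ω => X ω + Y ω) = covMatrix P X + covMatrix P Y := by
  have hcross : ∀ m n, cov[fun ω => X ω m, fun ω => Y ω n; P] = 0 := fun m n =>
    (hXY.comp (measurable_pi_apply m) (measurable_pi_apply n)).covariance_eq_zero (hX m) (hY n)
  ext m n
  have hadd : ∀ m, (fun ω => (X ω + Y ω) m) = (fun ω => X ω m) + fun ω => Y ω m := fun m => rfl
  rw [covMatrix_apply, hadd, hadd, covariance_add_left (hX m) (hY m) ((hX n).add (hY n)),
    covariance_add_right (hX m) (hX n) (hY n), covariance_add_right (hY m) (hX n) (hY n),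
    covariance_comm (fun ω => Y ω m), hcross, hcross, Matrix.add_apply, covMatrix_apply,
    covMatrix_apply]
  ring

end Covariance

lemma ProbabilityTheory.iIndepFun.indepFun_of_measurable_iSup {Ω ι β γ γ' : Type*}
    [MeasurableSpace Ω] {P : Measure Ω} [mβ : MeasurableSpace β] [MeasurableSpace γ]
    [MeasurableSpace γ'] {Z : ι → Ω → β} (hZ : iIndepFun Z P) (hZm : ∀ j, Measurable (Z j))
    {S T : Set ι} (hST : Disjoint S T) {Y : Ω → γ} {Y' : Ω → γ'}
    (hY : Measurable[⨆ j ∈ S, mβ.comap (Z j)] Y) (hY' : Measurable[⨆ j ∈ T, mβ.comap (Z j)] Y') :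
    IndepFun Y Y' P := by
  rw [IndepFun_iff_Indep]
  refine indep_of_indep_of_le_right (indep_of_indep_of_le_left ?_ hY.comap_le) hY'.comap_le
  exact indep_iSup_of_disjoint (fun j => (hZm j).comap_le) ((iIndepFun_iff_iIndep _ _ _).1 hZ) hST

lemma measurable_iSup_comap_of_succ_eq {Ω β : Type*} [mβ : MeasurableSpace β] {X Z : ℕ → Ω → β}
    {F : β → β → β} (hF : Measurable (Function.uncurry F)) (hZ0 : Z 0 = X 0)
    (hrec : ∀ i ω, X (i + 1) ω = F (X i ω) (Z (i + 1) ω)) (i : ℕ) :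
    Measurable[⨆ j ∈ Set.Iic i, mβ.comap (Z j)] (X i) := by
  have hZ : ∀ {k n : ℕ}, k ≤ n → Measurable[⨆ j ∈ Set.Iic n, mβ.comap (Z j)] (Z k) :=
    fun hkn => (comap_measurable _).mono
      (le_iSup₂ (f := fun j (_ : j ∈ Set.Iic _) => mβ.comap (Z j)) _ hkn) le_rfl
  induction i with
  | zero => exact hZ0 ▸ hZ le_rfl
  | succ i ih =>
    rw [funext (hrec i)]
    exact hF.comp ((ih.mono (biSup_mono fun j hj => hj.trans i.le_succ) le_rfl).prodMk (hZ le_rfl))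

section LinearRecursion

variable {Ω : Type*} [MeasurableSpace Ω] {P : Measure Ω} {N : ℕ} {W : Matrix (Fin N) (Fin N) ℝ}
  {X noise : ℕ → Ω → Fin N → ℝ}

lemma memLp_apply_of_succ_eq_mulVec_add (hX0 : ∀ n, MemLp (fun ω => X 0 ω n) 2 P)
    (hnoise : ∀ i n, MemLp (fun ω => noise i ω n) 2 P)
    (hrec : ∀ i ω, X (i + 1) ω = W *ᵥ X i ω + noise i ω) (i : ℕ) (n : Fin N) :
    MemLp (fun ω => X i ω n) 2 P := by
  induction i generalizing n with
  | zero => exact hX0 n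
  | succ i ih =>
    simp only [hrec, Pi.add_apply]
    exact (memLp_mulVec_apply ih W n).add (hnoise i n)

lemma covMatrix_succ_of_iIndepFun [IsFiniteMeasure P] {Z : ℕ → Ω → Fin N → ℝ}
    (hX0 : Measurable (X 0)) (hnoise : ∀ i, Measurable (noise i))
    (hX0sq : ∀ n, MemLp (fun ω => X 0 ω n) 2 P)
    (hnoisesq : ∀ i n, MemLp (fun ω => noise i ω n) 2 P)
    (hZ0 : Z 0 = X 0) (hZS : ∀ i, Z (i + 1) = noise i) (hindep : iIndepFun Z P)
    (hrec : ∀ i ω, X (i + 1) ω = W *ᵥ X i ω + noise i ω) (i : ℕ) :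
    covMatrix P (X (i + 1)) = W * covMatrix P (X i) * Wᵀ + covMatrix P (noise i) := by
  have hZ : ∀ j, Measurable (Z j) := by
    rintro (_ | i)
    exacts [hZ0 ▸ hX0, hZS i ▸ hnoise i]
  have hXi : Measurable[⨆ j ∈ Set.Iic i, MeasurableSpace.pi.comap (Z j)] (X i) :=
    measurable_iSup_comap_of_succ_eq (F := fun x y => W *ᵥ x + y) (by fun_prop) hZ0
      (fun i ω => by rw [hrec, hZS]) i
  have hnoisei : Measurable[⨆ j ∈ ({i + 1} : Set ℕ), MeasurableSpace.pi.comap (Z j)] (noise i) :=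
    hZS i ▸ (comap_measurable _).mono
      (le_iSup₂ (f := fun j (_ : j ∈ ({i + 1} : Set ℕ)) => MeasurableSpace.pi.comap (Z j)) _ rfl)
      le_rfl
  have hind : IndepFun (fun ω => W *ᵥ X i ω) (noise i) P :=
    (hindep.indepFun_of_measurable_iSup hZ (by simp) hXi hnoisei).comp
      (show Measurable (W *ᵥ ·) by fun_prop) measurable_id
  have hXsq := memLp_apply_of_succ_eq_mulVec_add hX0sq hnoisesq hrec i
  rw [funext (hrec i), covMatrix_add_of_indepFun (memLp_mulVec_apply hXsq W) (hnoisesq i) hind,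
    covMatrix_mulVec hXsq]

end LinearRecursion

namespace Matrix

lemma eq_pow_mul_mul_transpose_add_sum_of_succ_eq {n R : Type*} [Fintype n] [DecidableEq n]
    [CommSemiring R] {C : ℕ → Matrix n n R} {W Q : Matrix n n R}
    (hC : ∀ i, C (i + 1) = W * C i * Wᵀ + Q) (i : ℕ) :
    C i = W ^ i * C 0 * (W ^ i)ᵀ + ∑ k ∈ Finset.range i, W ^ k * Q * (W ^ k)ᵀ := by
  induction i with
  | zero => simp
  | succ i ih =>
    rw [hC, ih, Finset.sum_range_succ']
    simp only [Matrix.mul_add, Matrix.add_mul, Finset.mul_sum, Finset.sum_mul, pow_succ',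
      transpose_mul, Matrix.mul_assoc, pow_zero, transpose_one, Matrix.one_mul, Matrix.mul_one]
    abel

lemma mul_diagonal_mul_transpose_apply_self_le {m n : Type*} [Fintype n] [DecidableEq n]
    (M : Matrix m n ℝ) {d : n → ℝ} {r : ℝ} (hd : ∀ j, d j ≤ r) (i : m) :
    (M * diagonal d * Mᵀ) i i ≤ r * (M * Mᵀ) i i := by
  rw [mul_apply, mul_apply, Finset.mul_sum]
  refine Finset.sum_le_sum fun j _ => ?_
  rw [mul_diagonal, transpose_apply]
  nlinarith [mul_le_mul_of_nonneg_left (hd j) (mul_self_nonneg (M i j))]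

namespace IsHermitian

variable {n : Type*} [Fintype n] [DecidableEq n] {A : Matrix n n ℝ}

lemma cfc_apply_self (hA : A.IsHermitian) (f : ℝ → ℝ) (i : n) :
    cfc f A i i = ∑ j, f (hA.eigenvalues j) * hA.eigenvectorBasis j i ^ 2 := by
  rw [hA.cfc_eq, IsHermitian.cfc, Unitary.conjStarAlgAut_apply, mul_apply]
  refine Finset.sum_congr rfl fun j _ => ?_
  simp only [RCLike.ofReal_real_eq_id, CompTriple.comp_eq, mul_diagonal, eigenvectorUnitary_apply,
    Function.comp_apply, star_apply, star_trivial, sq]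
  ring

lemma sum_eigenvectorBasis_apply_sq (hA : A.IsHermitian) (i : n) :
    ∑ j, hA.eigenvectorBasis j i ^ 2 = 1 := by
  have h := hA.cfc_apply_self (fun _ => 1) i
  simp only [one_mul] at h
  rw [← h, cfc_const_one ℝ A hA.isSelfAdjoint, one_apply_eq]

end IsHermitian

end Matrix

namespace SimpleGraph

variable {V : Type*} [Fintype V] [DecidableEq V] {G : SimpleGraph V} [DecidableRel G.Adj]

lemma nonneg_of_mem_spectrum_lapMatrix {x : ℝ} (hx : x ∈ spectrum ℝ (G.lapMatrix ℝ)) : 0 ≤ x := by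
  obtain ⟨j, rfl⟩ := (isHermitian_lapMatrix ℝ G).spectrum_real_eq_range_eigenvalues ▸ hx
  exact (posSemidef_lapMatrix ℝ G).eigenvalues_nonneg j

lemma Connected.card_eigenvalues_lapMatrix_eq_zero (hG : G.Connected) :
    Fintype.card {j // (isHermitian_lapMatrix ℝ G).eigenvalues j = 0} = 1 := by
  have hL := isHermitian_lapMatrix ℝ G
  have hker : Module.finrank ℝ (G.lapMatrix ℝ).toLin'.ker = 1 := by
    rw [← card_connectedComponent_eq_finrank_ker_toLin'_lapMatrix, Fintype.card_eq_one_iff]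
    obtain ⟨v⟩ := hG.nonempty
    exact ⟨G.connectedComponentMk v, fun c => c.ind fun w => ConnectedComponent.sound (hG w v)⟩
  have hnullity : (G.lapMatrix ℝ).rank + 1 = Fintype.card V := by
    rw [← hker, ← Module.finrank_fintype_fun_eq_card ℝ]
    exact (G.lapMatrix ℝ).toLin'.finrank_range_add_finrank_ker
  rw [hL.rank_eq_card_non_zero_eigs, Fintype.card_subtype_compl] at hnullity
  have := Fintype.card_subtype_le fun j => hL.eigenvalues j = 0
  omega

lemma Connected.sq_apply_eq_of_lapMatrix_mulVec_eq_zero (hG : G.Connected)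
    {x : EuclideanSpace ℝ V} (hx : G.lapMatrix ℝ *ᵥ x = 0) (hnorm : ‖x‖ = 1) (v : V) :
    x v ^ 2 = 1 / Fintype.card V := by
  have hconst : ∀ w, x w = x v := fun w =>
    (lapMatrix_mulVec_eq_zero_iff_forall_reachable G).mp hx w v (hG w v)
  have hsum : ∑ w, x w ^ 2 = 1 := by
    rw [← EuclideanSpace.real_norm_sq_eq, hnorm, one_pow]
  simp only [hconst, Finset.sum_const, Finset.card_univ, nsmul_eq_mul] at hsum
  have : (Fintype.card V : ℝ) ≠ 0 := by
    have : Nonempty V := hG.nonempty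
    positivity
  field_simp
  linarith

theorem Connected.cfc_lapMatrix_apply_self_le (hG : G.Connected) {f : ℝ → ℝ} {b : ℝ}
    (hf0 : f 0 = 1) (hfb : ∀ x ∈ spectrum ℝ (G.lapMatrix ℝ), x ≠ 0 → f x ≤ b) (v : V) :
    cfc f (G.lapMatrix ℝ) v v ≤ 1 / Fintype.card V + b * (1 - 1 / Fintype.card V) := by
  set hL := isHermitian_lapMatrix ℝ G
  have hzero : ∑ j with hL.eigenvalues j = 0, hL.eigenvectorBasis j v ^ 2
      = 1 / Fintype.card V := by
    have hsq : ∀ j ∈ Finset.univ.filter (hL.eigenvalues · = 0),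
        hL.eigenvectorBasis j v ^ 2 = 1 / Fintype.card V := by
      intro j hj
      refine hG.sq_apply_eq_of_lapMatrix_mulVec_eq_zero ?_ (hL.eigenvectorBasis.orthonormal.1 j) v
      rw [hL.mulVec_eigenvectorBasis, (Finset.mem_filter.mp hj).2, zero_smul]
    rw [Finset.sum_congr rfl hsq, Finset.sum_const, ← Fintype.card_subtype,
      hG.card_eigenvalues_lapMatrix_eq_zero, one_smul]
  have hsplit := Finset.sum_filter_add_sum_filter_not Finset.univ (hL.eigenvalues · = 0)
    fun j => hL.eigenvectorBasis j v ^ 2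
  rw [hL.sum_eigenvectorBasis_apply_sq, hzero] at hsplit
  rw [hL.cfc_apply_self, ← Finset.sum_filter_add_sum_filter_not Finset.univ
    (hL.eigenvalues · = 0)]
  refine add_le_add (le_of_eq ?_) ?_
  · rw [← hzero]
    exact Finset.sum_congr rfl fun j hj => by rw [(Finset.mem_filter.mp hj).2, hf0, one_mul]
  · calc ∑ j with ¬hL.eigenvalues j = 0, f (hL.eigenvalues j) * hL.eigenvectorBasis j v ^ 2
        ≤ ∑ j with ¬hL.eigenvalues j = 0, b * hL.eigenvectorBasis j v ^ 2 := by
          refine Finset.sum_le_sum fun j hj => ?_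
          gcongr
          exact hfb _ (hL.eigenvalues_mem_spectrum_real j) (Finset.mem_filter.mp hj).2
      _ = b * (1 - 1 / Fintype.card V) := by rw [← Finset.mul_sum, eq_sub_of_add_eq' hsplit]

theorem Connected.one_sub_smul_lapMatrix_pow_mul_transpose_apply_self_le (hG : G.Connected)
    {α γ : ℝ} (hγ : ∀ x ∈ spectrum ℝ (G.lapMatrix ℝ), x ≠ 0 → (1 - α * x) ^ 2 ≤ γ ^ 2)
    (k : ℕ) (v : V) :
    ((1 - α • G.lapMatrix ℝ) ^ k * ((1 - α • G.lapMatrix ℝ) ^ k)ᵀ : Matrix V V ℝ) v v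
      ≤ 1 / Fintype.card V + γ ^ (2 * k) * (1 - 1 / Fintype.card V) := by
  have hL := isHermitian_lapMatrix ℝ G
  have hW : 1 - α • G.lapMatrix ℝ = cfc (fun x => 1 - α * x) (G.lapMatrix ℝ) := by
    rw [cfc_sub _ _ _, cfc_const_one ℝ _ hL.isSelfAdjoint, cfc_const_mul _ _ _,
      cfc_id' ℝ _ hL.isSelfAdjoint]
  have hsymm : (1 - α • G.lapMatrix ℝ)ᵀ = 1 - α • G.lapMatrix ℝ := by
    rw [transpose_sub, transpose_one, transpose_smul, (G.isSymm_lapMatrix ℝ).eq]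
  rw [transpose_pow, hsymm, ← pow_add, ← two_mul, hW, ← cfc_pow _ _ _]
  refine hG.cfc_lapMatrix_apply_self_le (by simp) (fun x hx hx0 => ?_) v
  rw [pow_mul, pow_mul]
  exact pow_le_pow_left₀ (sq_nonneg _) (hγ x hx hx0) k

end SimpleGraph

lemma sq_one_sub_div_mul_le {l₂ lₙ x : ℝ} (hl₂ : 0 < l₂) (hx₂ : l₂ ≤ x) (hxₙ : x ≤ lₙ) :
    (1 - 2 / (l₂ + lₙ) * x) ^ 2 ≤ ((lₙ - l₂) / (lₙ + l₂)) ^ 2 := by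
  have hs : 0 < l₂ + lₙ := by linarith
  rw [div_pow, le_div_iff₀ (pow_pos (by linarith) 2), add_comm lₙ, ← mul_pow, sub_mul,
    div_mul_eq_mul_div, div_mul_cancel₀ _ hs.ne', one_mul]
  nlinarith

lemma sq_sub_div_add_lt_one {l₂ lₙ : ℝ} (hl₂ : 0 < l₂) (hle : l₂ ≤ lₙ) :
    ((lₙ - l₂) / (lₙ + l₂)) ^ 2 < 1 :=
  pow_lt_one₀ (div_nonneg (by linarith) (by linarith))
    ((div_lt_one (by linarith)).2 (by linarith)) two_ne_zero

lemma sum_range_add_pow_mul_one_sub {a γ : ℝ} (hγ : γ ^ 2 ≠ 1) (i : ℕ) :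
    ∑ k ∈ Finset.range i, (a + γ ^ (2 * k) * (1 - a))
      = i * a + (1 - γ ^ (2 * i)) / (1 - γ ^ 2) * (1 - a) := by
  simp only [Finset.sum_add_distrib, ← Finset.sum_mul, pow_mul, geom_sum_eq hγ,
    Finset.sum_const, Finset.card_range, nsmul_eq_mul]
  rw [← neg_div_neg_eq, neg_sub, neg_sub]

theorem stmt9_general (N : ℕ) (G : SimpleGraph (Fin N)) [DecidableRel G.Adj]
    (hconn : G.Connected) (l2 lN : ℝ)
    (hl2 : IsLeast {x : ℝ | x ∈ spectrum ℝ (G.lapMatrix ℝ) ∧ x ≠ 0} l2)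
    (hlN : IsGreatest (spectrum ℝ (G.lapMatrix ℝ)) lN)
    (α γ₂ : ℝ) (hα : α = 2 / (l2 + lN)) (hγ₂ : γ₂ = (lN - l2) / (lN + l2))
    (W : Matrix (Fin N) (Fin N) ℝ) (hW : W = 1 - α • G.lapMatrix ℝ)
    (μ σ : ℝ)
    (φ : Fin N → ℝ) (R : Matrix (Fin N) (Fin N) ℝ)
    (hR : R = Matrix.diagonal fun j => φ j ^ 2)
    (φmax2 : ℝ) (hφmax : IsGreatest (Set.range fun j => φ j ^ 2) φmax2)
    {Ω : Type*} [MeasurableSpace Ω] (P : Measure Ω) [IsProbabilityMeasure P]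
    (X : ℕ → Ω → Fin N → ℝ) (noise : ℕ → Ω → Fin N → ℝ)
    (hX0meas : Measurable (X 0)) (hnoisemeas : ∀ i, Measurable (noise i))
    (hX0sq : ∀ n, MemLp (fun ω => X 0 ω n) 2 P)
    (hnoisesq : ∀ i n, MemLp (fun ω => noise i ω n) 2 P)
    (Z : ℕ → Ω → Fin N → ℝ) (hZ0 : Z 0 = X 0) (hZS : ∀ i, Z (i + 1) = noise i)
    (hindep : iIndepFun (m := fun _ : ℕ => MeasurableSpace.pi) Z P)
    (hcovX0 : covMatrix P (X 0) = (4 * μ ^ 2 / σ ^ 2) • (1 : Matrix (Fin N) (Fin N) ℝ))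
    (hcovnoise : ∀ i, covMatrix P (noise i) = R)
    (hrec : ∀ i ω, X (i + 1) ω = W.mulVec (X i ω) + noise i ω) :
    ∀ (i : ℕ) (n : Fin N),
      (∫ ω, (X i ω n - ∫ ω', X i ω' n ∂P) ^ 2 ∂P)
        ≤ (4 * μ ^ 2 / σ ^ 2) * (1 / (N : ℝ) + γ₂ ^ (2 * i) * (1 - 1 / (N : ℝ)))
          + φmax2 * ((i : ℝ) / (N : ℝ)
            + (1 - γ₂ ^ (2 * i)) / (1 - γ₂ ^ 2) * (1 - 1 / (N : ℝ))) := by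
  intro i n
  have hl2pos : 0 < l2 := (SimpleGraph.nonneg_of_mem_spectrum_lapMatrix hl2.1.1).lt_of_ne' hl2.1.2
  have hγ : γ₂ ^ 2 ≠ 1 := hγ₂ ▸ (sq_sub_div_add_lt_one hl2pos (hlN.2 hl2.1.1)).ne
  have hφ : 0 ≤ φmax2 := hφmax.1.choose_spec ▸ sq_nonneg _
  have hgain : ∀ k, (W ^ k * (W ^ k)ᵀ) n n ≤ 1 / N + γ₂ ^ (2 * k) * (1 - 1 / N) := fun k => by
    simpa only [hW, Fintype.card_fin] using
      hconn.one_sub_smul_lapMatrix_pow_mul_transpose_apply_self_le (fun x hx hx0 =>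
        hα ▸ hγ₂ ▸ sq_one_sub_div_mul_le hl2pos (hl2.2 ⟨hx, hx0⟩) (hlN.2 hx)) k n
  have hcov := eq_pow_mul_mul_transpose_add_sum_of_succ_eq (C := fun i => covMatrix P (X i))
    (fun i => by rw [covMatrix_succ_of_iIndepFun hX0meas hnoisemeas hX0sq hnoisesq hZ0 hZS
      hindep hrec, hcovnoise]) i
  calc (∫ ω, (X i ω n - ∫ ω', X i ω' n ∂P) ^ 2 ∂P)
      = 4 * μ ^ 2 / σ ^ 2 * (W ^ i * (W ^ i)ᵀ) n n
        + ∑ k ∈ Finset.range i, (W ^ k * R * (W ^ k)ᵀ) n n := by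
        rw [← covMatrix_apply_self, hcov, hcovX0, Matrix.mul_smul, Matrix.mul_one,
          Matrix.smul_mul, Matrix.add_apply, Matrix.sum_apply, Matrix.smul_apply, smul_eq_mul]
    _ ≤ 4 * μ ^ 2 / σ ^ 2 * (1 / N + γ₂ ^ (2 * i) * (1 - 1 / N))
        + ∑ k ∈ Finset.range i, φmax2 * (1 / N + γ₂ ^ (2 * k) * (1 - 1 / N)) := by
        gcongr with k
        · exact hgain i
        rw [hR]
        exact (mul_diagonal_mul_transpose_apply_self_le _ (fun j => hφmax.2 ⟨j, rfl⟩) n).trans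
          (mul_le_mul_of_nonneg_left (hgain k) hφ)
    _ = _ := by rw [← Finset.mul_sum, sum_range_add_pow_mul_one_sub hγ]; ring

/-- Per-sensor variance bound for noisy average consensus on a
connected graph: with `W = I - α* L`, `γ₂ = (λ_N - λ₂)/(λ_N + λ₂)`,
`Cov(X₀) = (4μ²/σ²) I`, noise covariance `R = diag(φ₁², …, φ_N²)`,
`φ_max² = max_j φ_j²`, and `X_{i+1} = W X_i + n_i` with `X₀, n₀, n₁, …` mutually
independent, one has
`Var(X_n(i)) ≤ (4μ²/σ²)[1/N + γ₂^{2i}(1-1/N)] + φ_max²[i/N + ((1-γ₂^{2i})/(1-γ₂²))(1-1/N)]`. -/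
theorem stmt9 (N : ℕ) (hN : 2 ≤ N) (G : SimpleGraph (Fin N)) [DecidableRel G.Adj]
    (hconn : G.Connected) (l2 lN : ℝ)
    (hl2 : IsLeast {x : ℝ | x ∈ spectrum ℝ (G.lapMatrix ℝ) ∧ x ≠ 0} l2)
    (hlN : IsGreatest (spectrum ℝ (G.lapMatrix ℝ)) lN)
    (α γ₂ : ℝ) (hα : α = 2 / (l2 + lN)) (hγ₂ : γ₂ = (lN - l2) / (lN + l2))
    (W : Matrix (Fin N) (Fin N) ℝ) (hW : W = 1 - α • G.lapMatrix ℝ)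
    (μ σ : ℝ) (hμ : 0 < μ) (hσ : 0 < σ)
    (φ : Fin N → ℝ) (R : Matrix (Fin N) (Fin N) ℝ)
    (hR : R = Matrix.diagonal fun j => φ j ^ 2)
    (φmax2 : ℝ) (hφmax : IsGreatest (Set.range fun j => φ j ^ 2) φmax2)
    {Ω : Type*} [MeasurableSpace Ω] (P : Measure Ω) [IsProbabilityMeasure P]
    (X : ℕ → Ω → Fin N → ℝ) (noise : ℕ → Ω → Fin N → ℝ)
    (hX0meas : Measurable (X 0)) (hnoisemeas : ∀ i, Measurable (noise i))
    (hX0sq : ∀ n, MemLp (fun ω => X 0 ω n) 2 P)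
    (hnoisesq : ∀ i n, MemLp (fun ω => noise i ω n) 2 P)
    (Z : ℕ → Ω → Fin N → ℝ) (hZ0 : Z 0 = X 0) (hZS : ∀ i, Z (i + 1) = noise i)
    (hindep : iIndepFun (m := fun _ : ℕ => MeasurableSpace.pi) Z P)
    (hcovX0 : covMatrix P (X 0) = (4 * μ ^ 2 / σ ^ 2) • (1 : Matrix (Fin N) (Fin N) ℝ))
    (hcovnoise : ∀ i, covMatrix P (noise i) = R)
    (hrec : ∀ i ω, X (i + 1) ω = W.mulVec (X i ω) + noise i ω) :
    ∀ (i : ℕ) (n : Fin N),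
      (∫ ω, (X i ω n - ∫ ω', X i ω' n ∂P) ^ 2 ∂P)
        ≤ (4 * μ ^ 2 / σ ^ 2) * (1 / (N : ℝ) + γ₂ ^ (2 * i) * (1 - 1 / (N : ℝ)))
          + φmax2 * ((i : ℝ) / (N : ℝ)
            + (1 - γ₂ ^ (2 * i)) / (1 - γ₂ ^ 2) * (1 - 1 / (N : ℝ))) :=
  stmt9_general N G hconn l2 lN hl2 hlN α γ₂ hα hγ₂ W hW μ σ φ R hR φmax2 hφmax P X noise hX0meas
    hnoisemeas hX0sq hnoisesq Z hZ0 hZS hindep hcovX0 hcovnoise hrec
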